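/- For h > 0, the polynomial f(z,h,1) := z⁴ − 3z³(1+h) + 3z²(h²−7h+1) − z(1+h)³ (the quartic q at γ=1) satisfies f(z,h,1) = z·(z³ − 3(1+h)z² + 3(h²−7h+1)z − (1+h)³), and its unique positive real root is z = (1 + h^{1/3})³, i.e., f((1+h^{1/3})³, h, 1) = 0. -/

import Mathlib

noncomputable def f1 (h z : ℝ) : ℝ :=
  z^4 - 3 * z^3 * (1 + h) + 3 * z^2 * (h^2 - 7 * h + 1) - z * (1 + h)^3

/-!
The cubic factor of `f1 h z` is `(z - 1 - h)³ - 27 h z`. Writing `h = t³` and `z = u³` with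
`t, u > 0`, it vanishes iff `u³ - 1 - t³ = 3 t u` (cubes are injective), and by the identity
`a³ + b³ + c³ - 3abc = ½ (a + b + c) ((a - b)² + (b - c)² + (c - a)²)` at `(a, b, c) = (1, t, -u)`
this forces `u = 1 + t`.
-/

lemma f1_eq_mul_cube_sub (h z : ℝ) : f1 h z = z * ((z - (1 + h)) ^ 3 - 27 * h * z) := by
  unfold f1; ring

lemma f1_cube_one_add_cube (t : ℝ) : f1 (t ^ 3) ((1 + t) ^ 3) = 0 := by
  rw [f1_eq_mul_cube_sub]; ring

section OrderedRing

variable {R : Type*} [CommRing R] [LinearOrder R] [IsStrictOrderedRing R]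

lemma eq_one_add_of_cube_sub_one_sub_cube_eq {t u : R} (hu : 0 ≤ u)
    (h : (u ^ 3 - 1 - t ^ 3) ^ 3 = 27 * t ^ 3 * u ^ 3) : u = 1 + t := by
  have hcube : u ^ 3 - 1 - t ^ 3 = 3 * t * u :=
    (Odd.pow_inj (n := 3) (by decide)).mp (by rw [h]; ring)
  have hsq : 0 < (1 - t) ^ 2 + (t + u) ^ 2 + (u + 1) ^ 2 := by positivity
  have hfactor : (u - (1 + t)) * ((1 - t) ^ 2 + (t + u) ^ 2 + (u + 1) ^ 2) = 0 := by
    linear_combination 2 * hcube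
  exact sub_eq_zero.mp ((mul_eq_zero.mp hfactor).resolve_right hsq.ne')

end OrderedRing

lemma Real.rpow_one_div_three_pow_three {x : ℝ} (hx : 0 ≤ x) : (x ^ ((1 : ℝ) / 3)) ^ 3 = x := by
  simpa using Real.rpow_inv_natCast_pow hx three_ne_zero

theorem f1_factor_and_root (h : ℝ) (hh : 0 < h) :
    (∀ z : ℝ, f1 h z = z * (z^3 - 3 * (1 + h) * z^2 + 3 * (h^2 - 7 * h + 1) * z - (1 + h)^3)) ∧
    f1 h ((1 + h ^ ((1:ℝ)/3))^3) = 0 ∧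
    (∀ z : ℝ, 0 < z → f1 h z = 0 → z = (1 + h ^ ((1:ℝ)/3))^3) := by
  set t := h ^ ((1 : ℝ) / 3)
  have ht : t ^ 3 = h := Real.rpow_one_div_three_pow_three hh.le
  refine ⟨fun z => by unfold f1; ring, ?_, fun z hz hroot => ?_⟩
  · rw [← ht]
    exact f1_cube_one_add_cube t
  · have hu : (z ^ ((1 : ℝ) / 3)) ^ 3 = z := Real.rpow_one_div_three_pow_three hz.le
    rw [f1_eq_mul_cube_sub] at hroot
    have hcubic := (mul_eq_zero.mp hroot).resolve_left hz.ne'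
    have hcube_root := eq_one_add_of_cube_sub_one_sub_cube_eq (t := t)
      (Real.rpow_nonneg hz.le _) (by rw [ht, hu]; linear_combination hcubic)
    rw [← hu, hcube_root]
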